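/- Let F ∈ L_1(S) and let (I_0,<_0), (I_1,<_1), …, (I_{k−1},<_{k−1}) be compact nondegenerate intervals of S endowed with orders such that (I_0,<_0) →^{ε_1}_{F^{n_1}−p_1} (I_1,<_1) →^{ε_2}_{F^{n_2}−p_2} ⋯ →^{ε_{k}}_{F^{n_k}−p_k} (I_0,<_0) is a loop of signed coverings of positive sign, where n_i ∈ ℕ and p_i ∈ ℤ. For 1 ≤ i ≤ k set m_i := n_1 + ⋯ + n_i and p̂_i := p_1 + ⋯ + p_i. Then there exists x_0 ∈ I_0 such that F^{m_k}(x_0) = x_0 + p̂_k and F^{m_i}(x_0) ∈ I_i + p̂_i for all 1 ≤ i ≤ k−1. -/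

import Mathlib

open Set Filter Function

noncomputable section

/-- The real axis in `ℂ`. -/
def realAxis : Set ℂ := {z : ℂ | z.im = 0}

/-- The union of the branches of `S`. -/
def branches : Set ℂ := {z : ℂ | (∃ m : ℤ, z.re = (m : ℝ)) ∧ z.im ∈ Set.Icc (0 : ℝ) 1}

/-- The universal covering `S = ℝ ∪ B` of the space `σ`. -/
def Sspace : Set ℂ := realAxis ∪ branches

/-- The branch `B_m`. -/
def branch (m : ℤ) : Set ℂ := {z : ℂ | z.re = (m : ℝ) ∧ z.im ∈ Set.Icc (0 : ℝ) 1}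

/-- `F` is a continuous self-map of `S` of degree `d`, i.e. `F ∈ L_d(S)`. -/
def DegMap (d : ℤ) (F : ℂ → ℂ) : Prop :=
  Set.MapsTo F Sspace Sspace ∧ ContinuousOn F Sspace ∧
    ∀ z ∈ Sspace, F (z + 1) = F z + (d : ℂ)

/-- `z` is a periodic (mod 1) point of `F` of period `n`. -/
def IsPeriodicMod1 (F : ℂ → ℂ) (z : ℂ) (n : ℕ) : Prop :=
  0 < n ∧ (∃ k : ℤ, F^[n] z = z + (k : ℂ)) ∧
    ∀ i : ℕ, 0 < i → i < n → ∀ k : ℤ, F^[i] z ≠ z + (k : ℂ)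

/-- The set `Per(F)` of periods (mod 1) of `F`. -/
def PerSet (F : ℂ → ℂ) : Set ℕ := {n : ℕ | ∃ z ∈ Sspace, IsPeriodicMod1 F z n}

/-- `x` is a true periodic point of `G` of least period `n`. -/
def IsTruePeriodic (G : ℂ → ℂ) (x : ℂ) (n : ℕ) : Prop :=
  0 < n ∧ G^[n] x = x ∧ ∀ i : ℕ, 0 < i → i < n → G^[i] x ≠ x

/-- The rotation number of `z` under `F` is `ρ`. -/
def HasRotNum (F : ℂ → ℂ) (z : ℂ) (ρ : ℝ) : Prop :=
  Filter.Tendsto (fun n : ℕ => ((F^[n] z).re - z.re) / (n : ℝ)) Filter.atTop (nhds ρ)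

/-- `Rot_ℝ(F)`. -/
def RotR (F : ℂ → ℂ) : Set ℝ := {ρ : ℝ | ∃ x : ℝ, HasRotNum F (x : ℂ) ρ}

/-- `Rot(F)`. -/
def RotSet (F : ℂ → ℂ) : Set ℝ := {ρ : ℝ | ∃ z ∈ Sspace, HasRotNum F z ρ}

/-- `Per(α, F)`: periods (mod 1) of points with rotation number `α`. -/
def PerRot (F : ℂ → ℂ) (α : ℝ) : Set ℕ :=
  {n : ℕ | ∃ z ∈ Sspace, IsPeriodicMod1 F z n ∧ HasRotNum F z α}

/-- The Sharkovsky ordering `a ≤_Sh b`. -/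
def sharkLe (a b : ℕ) : Prop :=
  if ordCompl[2] a = 1 then
    (if ordCompl[2] b = 1 then a.factorization 2 ≤ b.factorization 2 else True)
  else
    ordCompl[2] b ≠ 1 ∧ (b.factorization 2 < a.factorization 2 ∨
      (b.factorization 2 = a.factorization 2 ∧ ordCompl[2] b ≤ ordCompl[2] a))

/-- The initial segment `Shs(s)` of the Sharkovsky ordering. -/
def Shs (s : ℕ) : Set ℕ := {k : ℕ | 0 < k ∧ sharkLe k s}

/-- Initial segments of the Sharkovsky ordering: either `Shs(s)` for some `s ∈ ℕ`,
or the set of all powers of `2` (corresponding to the symbol `2^∞`). -/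
def ShInitialSeg (E : Set ℕ) : Prop :=
  (∃ s : ℕ, 0 < s ∧ E = Shs s) ∨ E = {k : ℕ | ∃ i : ℕ, k = 2 ^ i}

/-- `M(c, d)`. -/
def Mset (c d : ℝ) : Set ℕ :=
  {n : ℕ | 0 < n ∧ ∃ k : ℤ, c < (k : ℝ) / (n : ℝ) ∧ (k : ℝ) / (n : ℝ) < d}

/-- `Λ(ρ, E)`. -/
def Lam (ρ : ℝ) (E : Set ℕ) : Set ℕ :=
  {m : ℕ | ∃ k : ℤ, ∃ n : ℕ, 0 < n ∧ Int.gcd k (n : ℤ) = 1 ∧ ρ = (k : ℝ) / (n : ℝ) ∧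
    ∃ q ∈ E, m = n * q}

/-- The lifted orbit of `z` under `F`. -/
def LOrb (F : ℂ → ℂ) (z : ℂ) : Set ℂ :=
  {w : ℂ | ∃ n : ℕ, ∃ k : ℤ, w = F^[n] z + (k : ℂ)}

/-- The convex hull of `A` in `S`: the smallest closed connected subset of `S`
containing `A`. -/
def sHull (A : Set ℂ) : Set ℂ :=
  ⋂₀ {C : Set ℂ | A ⊆ C ∧ C ⊆ Sspace ∧ IsClosed C ∧ IsConnected C}

/-- Compact nondegenerate intervals of `S`. -/
def IsCNInterval (I : Set ℂ) : Prop :=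
  ∃ a b : ℂ, a ∈ Sspace ∧ b ∈ Sspace ∧ a ≠ b ∧ I = sHull {a, b}

/-- `I` `G`-covers `J`: there is a subinterval `I' ⊆ I` with `G(I') = J`. -/
def Covers (G : ℂ → ℂ) (I J : Set ℂ) : Prop :=
  ∃ a b : ℂ, a ∈ I ∧ b ∈ I ∧ sHull {a, b} ⊆ I ∧ G '' sHull {a, b} = J

/-- The interior of `K` relative to the subspace `S`. -/
def relInterior (K : Set ℂ) : Set ℂ := {z ∈ Sspace | K ∈ nhdsWithin z Sspace}

/-- The map `F_0 : S → B_0`, `F_0(z) = F(z) − Re(F(z))`. -/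
def Fzero (F : ℂ → ℂ) (z : ℂ) : ℂ := F z - ((F z).re : ℂ)

/-- The set `A + ℤ` of integer translates of `A`. -/
def trZ (A : Set ℂ) : Set ℂ := {w : ℂ | ∃ z ∈ A, ∃ k : ℤ, w = z + (k : ℂ)}

/-- `(I, <_I)` positively `G`-covers `(J, <_J)`, where `I` is the oriented interval with
endpoints `a = min I`, `b = max I`, and `J` the oriented interval with endpoints
`c = min J`, `d = max J`; the order along `I` is: `x ≤_I y` iff `x ∈ ⟨{a, y}⟩`. -/
def PosCovers (G : ℂ → ℂ) (a b c d : ℂ) : Prop :=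
  ∃ x y : ℂ, x ∈ sHull {a, b} ∧ y ∈ sHull {a, b} ∧ x ∈ sHull {a, y} ∧ G x = c ∧ G y = d

/-- `(I, <_I)` negatively `G`-covers `(J, <_J)`. -/
def NegCovers (G : ℂ → ℂ) (a b c d : ℂ) : Prop := PosCovers G a b d c

/-- A concrete 3-star `X₃ ⊆ ℂ` with branching point `0`: the union of the three
segments `[-1,0]`, `[0,1]` and `[0,i]`. -/
def star3 : Set ℂ :=
  {z : ℂ | z.im = 0 ∧ z.re ∈ Set.Icc (-1 : ℝ) 1} ∪
    {z : ℂ | z.re = 0 ∧ z.im ∈ Set.Icc (0 : ℝ) 1}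

/-- `TPer(f)`: the set of least periods of the periodic points of `f` in `X`. -/
def TPer (f : ℂ → ℂ) (X : Set ℂ) : Set ℕ :=
  {n : ℕ | ∃ x ∈ X, IsTruePeriodic f x n}

open Classical in
/-- The taxicab distance on `S`. -/
def sDist (x y : ℂ) : ℝ :=
  if (∃ m : ℤ, x.re = (m : ℝ) ∧ y.re = (m : ℝ)) ∧
      x.im ∈ Set.Icc (0 : ℝ) 1 ∧ y.im ∈ Set.Icc (0 : ℝ) 1 then
    |x.im - y.im|
  else |x.im| + |x.re - y.re| + |y.im|

/-!
Every compact interval `⟨a, b⟩` of the tree `S` is an arc, and the first-point map of `S` onto it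
becomes, in a coordinate along the arc, a continuous map `S → [0, L]` that is locally constant off
the arc. Following each `F^{n_i} − p_i` by the retraction onto the next interval turns the loop of
coverings into a loop of coverings of real intervals; orienting every interval by the running sign
of the loop makes all of them positive, and positivity of the loop is what brings the last interval
back with the orientation of the first. Nested intermediate value arguments give `u < v` at which
the retracted composite `θ : [0, L₀] → [0, L₀]` takes the values `0` and `L₀`, so `θ` has a fixed
point that does not lie inside a plateau of `θ`. Along the orbit of such a point no retraction
actually moved anything, since otherwise `θ` would be locally constant there.
-/

open Topology

theorem exists_le_apply_eq_apply_eq {φ : ℝ → ℝ} {u v s s' : ℝ} (huv : u ≤ v)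
    (hφ : ContinuousOn φ (Icc u v)) (hs : φ u ≤ s) (hss' : s ≤ s') (hs' : s' ≤ φ v) :
    ∃ x ∈ Icc u v, ∃ y ∈ Icc x v, φ x = s ∧ φ y = s' := by
  obtain ⟨y, hy, hφy⟩ := intermediate_value_Icc huv hφ ⟨hs.trans hss', hs'⟩
  obtain ⟨x, hx, hφx⟩ := intermediate_value_Icc hy.1 (hφ.mono (Icc_subset_Icc le_rfl hy.2))
    (show s ∈ Icc (φ u) (φ y) from ⟨hs, hφy ▸ hss'⟩)
  exact ⟨x, ⟨hx.1, hx.2.trans hy.2⟩, y, ⟨hx.2, hy.2⟩, hφx, hφy⟩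

theorem exists_fixedPt_not_eventually_eq_of_apply_lt {θ : ℝ → ℝ} {d v : ℝ} (hdv : d ≤ v)
    (hθ : ContinuousOn θ (Icc d v)) (hd : θ d < d) (hv : v ≤ θ v) :
    ∃ q ∈ Icc d v, θ q = q ∧ ¬ ∀ᶠ t in 𝓝[Icc d v] q, θ t = q := by
  have hg : ContinuousOn (fun t => θ t - t) (Icc d v) := hθ.sub continuousOn_id
  have hQ : IsCompact (Icc d v ∩ (fun t => θ t - t) ⁻¹' {0}) :=
    isCompact_Icc.of_isClosed_subset
      (hg.preimage_isClosed_of_isClosed isClosed_Icc isClosed_singleton) inter_subset_left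
  obtain ⟨q₀, hq₀, hq₀fix⟩ := intermediate_value_Icc hdv hg
    (show (0 : ℝ) ∈ Icc (θ d - d) (θ v - v) from ⟨by linarith, by linarith⟩)
  -- the least fixed point in `[d, v]` cannot lie inside a plateau of `θ`
  obtain ⟨q, ⟨hq, hqfix⟩, hqmin⟩ := hQ.exists_isLeast ⟨q₀, hq₀, hq₀fix⟩
  have hqfix : θ q = q := sub_eq_zero.mp hqfix
  refine ⟨q, hq, hqfix, fun hev => ?_⟩
  have hdq : d < q := hq.1.lt_of_ne (by rintro rfl; linarith)
  have := right_nhdsWithin_Ioo_neBot hdq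
  obtain ⟨t, hθt, ht⟩ := ((hev.filter_mono (nhdsWithin_mono _
    (Ioo_subset_Icc_self.trans (Icc_subset_Icc le_rfl hq.2)))).and
    eventually_mem_nhdsWithin).exists
  obtain ⟨r, hr, hrfix⟩ := intermediate_value_Icc ht.1.le
    (hg.mono (Icc_subset_Icc le_rfl (ht.2.le.trans hq.2)))
    (show (0 : ℝ) ∈ Icc (θ d - d) (θ t - t) from ⟨by linarith, by linarith [ht.2]⟩)
  have := hqmin ⟨⟨hr.1, hr.2.trans (ht.2.le.trans hq.2)⟩, hrfix⟩
  linarith [hr.2, ht.2]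

theorem exists_fixedPt_not_eventually_eq {θ : ℝ → ℝ} {u v : ℝ} (huv : u < v)
    (hθ : ContinuousOn θ (Icc u v)) (hu : θ u ≤ u) (hv : v ≤ θ v) :
    ∃ q ∈ Icc u v, θ q = q ∧ ¬ ∀ᶠ t in 𝓝[Icc u v] q, θ t = q := by
  by_cases h : ∃ d ∈ Icc u v, θ d < d
  · obtain ⟨d, hd, hθd⟩ := h
    have hsub : Icc d v ⊆ Icc u v := Icc_subset_Icc hd.1 le_rfl
    obtain ⟨q, hq, hfix, hnot⟩ :=
      exists_fixedPt_not_eventually_eq_of_apply_lt hd.2 (hθ.mono hsub) hθd hv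
    exact ⟨q, hsub hq, hfix, fun hev => hnot (hev.filter_mono (nhdsWithin_mono _ hsub))⟩
  · push Not at h
    refine ⟨u, left_mem_Icc.2 huv.le, le_antisymm hu (h u (left_mem_Icc.2 huv.le)),
      fun hev => ?_⟩
    have := left_nhdsWithin_Ioo_neBot huv
    obtain ⟨t, hθt, ht⟩ := ((hev.filter_mono (nhdsWithin_mono _ Ioo_subset_Icc_self)).and
      eventually_mem_nhdsWithin).exists
    linarith [h t (Ioo_subset_Icc_self ht), ht.1]

lemma eventually_eq_of_isOpen {α β : Type*} [TopologicalSpace α] {X U : Set α} {f : α → β}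
    {c : β} {x : α} (hU : IsOpen U) (hxX : x ∈ X) (hxU : x ∈ U) (h : ∀ y ∈ X ∩ U, f y = c) :
    ∀ᶠ y in 𝓝[X] x, f y = f x := by
  filter_upwards [self_mem_nhdsWithin, mem_nhdsWithin_of_mem_nhds (hU.mem_nhds hxU)]
    with y hyX hyU
  rw [h y ⟨hyX, hyU⟩, h x ⟨hxX, hxU⟩]

structure ArcData (α : Type*) where
  len : ℝ
  param : ℝ → α
  coord : α → ℝ

namespace ArcData

variable {α : Type*} (A B : ArcData α)

def arc : Set α := A.param '' Icc 0 A.len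

def reverse : ArcData α where
  len := A.len
  param t := A.param (A.len - t)
  coord x := A.len - A.coord x

def orient : Bool → ArcData α
  | true => A
  | false => A.reverse

@[simp] lemma reverse_len : A.reverse.len = A.len := rfl

@[simp] lemma orient_true : A.orient true = A := rfl

@[simp] lemma orient_false : A.orient false = A.reverse := rfl

@[simp] lemma reverse_reverse : A.reverse.reverse = A := by
  cases A
  simp [reverse]

lemma reverse_orient (σ : Bool) : (A.orient σ).reverse = A.orient (!σ) := by
  cases σ <;> simp [orient]

lemma arc_reverse : A.reverse.arc = A.arc := by
  simp only [arc, reverse]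
  ext x
  constructor
  · rintro ⟨t, ht, rfl⟩
    exact ⟨A.len - t, ⟨by linarith [ht.2], by linarith [ht.1]⟩, rfl⟩
  · rintro ⟨t, ht, rfl⟩
    exact ⟨A.len - t, ⟨by linarith [ht.2], by linarith [ht.1]⟩, by simp⟩

lemma arc_orient (σ : Bool) : (A.orient σ).arc = A.arc := by
  cases σ
  · exact A.arc_reverse
  · rfl

def Covers (G : α → α) : Prop :=
  ∃ s ∈ Icc 0 A.len, ∃ s' ∈ Icc s A.len,
    B.coord (G (A.param s)) = 0 ∧ B.coord (G (A.param s')) = B.len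

variable {A B} {G : α → α}

lemma Covers.reverse (h : A.Covers B G) : A.reverse.Covers B.reverse G := by
  obtain ⟨s, hs, s', hs', h0, hL⟩ := h
  refine ⟨A.len - s', ⟨by linarith [hs'.2], by rw [reverse_len]; linarith [hs.1, hs'.1]⟩,
    A.len - s, ⟨by linarith [hs'.1], by rw [reverse_len]; linarith [hs.1]⟩, ?_, ?_⟩
  · simp [ArcData.reverse, hL]
  · simp [ArcData.reverse, h0]

lemma Covers.orient {ε : Bool} (h : A.Covers (B.orient ε) G) (σ : Bool) :
    (A.orient σ).Covers (B.orient (σ == ε)) G := by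
  cases σ
  · simpa [← reverse_orient] using h.reverse
  · simpa using h

variable [TopologicalSpace α]

structure IsRetractArc (A : ArcData α) (X : Set α) : Prop where
  len_pos : 0 < A.len
  continuousOn_param : ContinuousOn A.param (Icc 0 A.len)
  continuousOn_coord : ContinuousOn A.coord X
  mapsTo_param : MapsTo A.param (Icc 0 A.len) X
  mapsTo_coord : MapsTo A.coord X (Icc 0 A.len)
  coord_param : ∀ t ∈ Icc 0 A.len, A.coord (A.param t) = t
  eventually_coord_eq : ∀ x ∈ X, x ∉ A.arc → ∀ᶠ y in 𝓝[X] x, A.coord y = A.coord x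

namespace IsRetractArc

variable {X : Set α}

lemma arc_subset (hA : A.IsRetractArc X) : A.arc ⊆ X := hA.mapsTo_param.image_subset

lemma param_coord (hA : A.IsRetractArc X) {x : α} (hx : x ∈ A.arc) : A.param (A.coord x) = x := by
  obtain ⟨t, ht, rfl⟩ := hx
  rw [hA.coord_param t ht]

lemma reverse (hA : A.IsRetractArc X) : A.reverse.IsRetractArc X := by
  have hflip : MapsTo (fun t => A.len - t) (Icc 0 A.len) (Icc 0 A.len) :=
    fun t ht => ⟨by linarith [ht.2], by linarith [ht.1]⟩
  refine ⟨hA.len_pos, ?_, continuousOn_const.sub hA.continuousOn_coord,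
    hA.mapsTo_param.comp hflip, fun x hx => ?_, fun t ht => ?_, fun x hx hxA => ?_⟩
  · exact hA.continuousOn_param.comp (continuousOn_const.sub continuousOn_id) hflip
  · have := hA.mapsTo_coord hx
    exact ⟨sub_nonneg.2 this.2, sub_le_self _ this.1⟩
  · simp [ArcData.reverse, hA.coord_param _ (hflip ht)]
  · rw [arc_reverse] at hxA
    filter_upwards [hA.eventually_coord_eq x hx hxA] with y hy
    simp [ArcData.reverse, hy]

lemma orient (hA : A.IsRetractArc X) (σ : Bool) : (A.orient σ).IsRetractArc X := by
  cases σ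
  · exact hA.reverse
  · exact hA

end IsRetractArc

end ArcData

section RetractedOrbit

variable {α : Type*} [TopologicalSpace α] {X : Set α} {k : ℕ} {D : ℕ → ArcData α}
  {G : ℕ → α → α}

def retractedOrbit (D : ℕ → ArcData α) (G : ℕ → α → α) : ℕ → ℝ → α
  | 0 => (D 0).param
  | i + 1 => fun t => (D (i + 1)).param ((D (i + 1)).coord (G i (retractedOrbit D G i t)))

lemma retractedOrbit_mem_arc (hD : ∀ i ≤ k, (D i).IsRetractArc X)
    (hG : ∀ i < k, MapsTo (G i) X X) {i : ℕ} (hi : i ≤ k) {t : ℝ} (ht : t ∈ Icc 0 (D 0).len) :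
    retractedOrbit D G i t ∈ (D i).arc := by
  induction i with
  | zero => exact mem_image_of_mem _ ht
  | succ i ih =>
    exact mem_image_of_mem _ ((hD (i + 1) hi).mapsTo_coord
      (hG i hi ((hD i (by omega)).arc_subset (ih (by omega)))))

lemma continuousOn_retractedOrbit (hD : ∀ i ≤ k, (D i).IsRetractArc X)
    (hG : ∀ i < k, MapsTo (G i) X X) (hGc : ∀ i < k, ContinuousOn (G i) X) {i : ℕ}
    (hi : i ≤ k) : ContinuousOn (retractedOrbit D G i) (Icc 0 (D 0).len) := by
  induction i with
  | zero => exact (hD 0 hi).continuousOn_param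
  | succ i ih =>
    have hDi := hD (i + 1) hi
    have hZ : MapsTo (retractedOrbit D G i) (Icc 0 (D 0).len) X := fun t ht =>
      (hD i (by omega)).arc_subset (retractedOrbit_mem_arc hD hG (by omega) ht)
    exact hDi.continuousOn_param.comp (hDi.continuousOn_coord.comp ((hGc i hi).comp
      (ih (by omega)) hZ) ((hG i hi).comp hZ)) (hDi.mapsTo_coord.comp ((hG i hi).comp hZ))

lemma coord_retractedOrbit_succ (hD : ∀ i ≤ k, (D i).IsRetractArc X)
    (hG : ∀ i < k, MapsTo (G i) X X) {i : ℕ} (hi : i < k) {t : ℝ}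
    (ht : t ∈ Icc 0 (D 0).len) :
    (D (i + 1)).coord (retractedOrbit D G (i + 1) t) =
      (D (i + 1)).coord (G i ((D i).param ((D i).coord (retractedOrbit D G i t)))) := by
  have hZ := retractedOrbit_mem_arc hD hG hi.le ht
  rw [(hD i hi.le).param_coord hZ]
  exact (hD (i + 1) hi).coord_param _
    ((hD (i + 1) hi).mapsTo_coord (hG i hi ((hD i hi.le).arc_subset hZ)))

lemma exists_coord_retractedOrbit_eq (hD : ∀ i ≤ k, (D i).IsRetractArc X)
    (hG : ∀ i < k, MapsTo (G i) X X) (hGc : ∀ i < k, ContinuousOn (G i) X)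
    (hcov : ∀ i < k, (D i).Covers (D (i + 1)) (G i)) {i : ℕ} (hi : i ≤ k) :
    ∃ u ∈ Icc 0 (D 0).len, ∃ v ∈ Icc u (D 0).len,
      (D i).coord (retractedOrbit D G i u) = 0 ∧
        (D i).coord (retractedOrbit D G i v) = (D i).len := by
  induction i with
  | zero =>
    have hL := (hD 0 hi).len_pos.le
    exact ⟨0, ⟨le_rfl, hL⟩, (D 0).len, ⟨hL, le_rfl⟩, (hD 0 hi).coord_param 0 ⟨le_rfl, hL⟩,
      (hD 0 hi).coord_param _ ⟨hL, le_rfl⟩⟩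
  | succ i ih =>
    obtain ⟨u, hu, v, hv, hu0, hvL⟩ := ih (by omega)
    obtain ⟨s, hs, s', hs', hs0, hs'L⟩ := hcov i hi
    have huv : Icc u v ⊆ Icc 0 (D 0).len := Icc_subset_Icc hu.1 hv.2
    have hθ : ContinuousOn (fun t => (D i).coord (retractedOrbit D G i t)) (Icc u v) :=
      ((hD i (by omega)).continuousOn_coord.comp
        (continuousOn_retractedOrbit hD hG hGc (by omega)) fun t ht =>
          (hD i (by omega)).arc_subset (retractedOrbit_mem_arc hD hG (by omega) ht)).mono huv
    obtain ⟨x, hx, y, hy, hθx, hθy⟩ := exists_le_apply_eq_apply_eq hv.1 hθ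
      (hu0 ▸ hs.1) hs'.1 (hvL ▸ hs'.2)
    refine ⟨x, huv hx, y, ⟨hy.1, hy.2.trans hv.2⟩, ?_, ?_⟩
    · rw [coord_retractedOrbit_succ hD hG hi (huv hx), hθx, hs0]
    · rw [coord_retractedOrbit_succ hD hG hi (huv ⟨hx.1.trans hy.1, hy.2⟩), hθy, hs'L]

lemma eventually_retractedOrbit_eq (hD : ∀ i ≤ k, (D i).IsRetractArc X)
    (hG : ∀ i < k, MapsTo (G i) X X) (hGc : ∀ i < k, ContinuousOn (G i) X) {i : ℕ}
    (hi : i < k) {t₀ : ℝ} (ht₀ : t₀ ∈ Icc 0 (D 0).len)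
    (hout : G i (retractedOrbit D G i t₀) ∉ (D (i + 1)).arc) {j : ℕ} (hij : i < j)
    (hj : j ≤ k) :
    ∀ᶠ t in 𝓝[Icc 0 (D 0).len] t₀, retractedOrbit D G j t = retractedOrbit D G j t₀ := by
  induction j, hij using Nat.le_induction with
  | base =>
    have hZ : MapsTo (retractedOrbit D G i) (Icc 0 (D 0).len) X := fun t ht =>
      (hD i hi.le).arc_subset (retractedOrbit_mem_arc hD hG hi.le ht)
    have hlim : Tendsto (fun t => G i (retractedOrbit D G i t)) (𝓝[Icc 0 (D 0).len] t₀)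
        (𝓝[X] G i (retractedOrbit D G i t₀)) :=
      (((hGc i hi).comp (continuousOn_retractedOrbit hD hG hGc hi.le) hZ) t₀
        ht₀).tendsto_nhdsWithin ((hG i hi).comp hZ)
    filter_upwards [hlim.eventually ((hD (i + 1) hj).eventually_coord_eq _ (hG i hi (hZ ht₀))
      hout)] with t ht
    simp only [retractedOrbit, ht]
  | succ j hij ih =>
    filter_upwards [ih (by omega)] with t ht
    simp only [retractedOrbit, ht]

theorem exists_orbit_of_covers_loop (hD : ∀ i ≤ k, (D i).IsRetractArc X) (hloop : D k = D 0)
    (hG : ∀ i < k, MapsTo (G i) X X) (hGc : ∀ i < k, ContinuousOn (G i) X)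
    (hcov : ∀ i < k, (D i).Covers (D (i + 1)) (G i)) :
    ∃ z : ℕ → α, (∀ i ≤ k, z i ∈ (D i).arc) ∧ (∀ i < k, z (i + 1) = G i (z i)) ∧ z k = z 0 := by
  set Z := retractedOrbit D G
  have hD0 := hD 0 (Nat.zero_le k)
  obtain ⟨u, hu, v, hv, hu0, hvL⟩ := exists_coord_retractedOrbit_eq hD hG hGc hcov le_rfl
  rw [hloop] at hu0 hvL
  have huv : u < v := hv.1.lt_of_ne (by rintro rfl; linarith [hD0.len_pos])
  have hsub : Icc u v ⊆ Icc 0 (D 0).len := Icc_subset_Icc hu.1 hv.2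
  have hZk : ∀ t ∈ Icc 0 (D 0).len, Z k t ∈ (D 0).arc := fun t ht =>
    hloop ▸ retractedOrbit_mem_arc hD hG le_rfl ht
  have hθ : ContinuousOn (fun t => (D 0).coord (Z k t)) (Icc u v) :=
    (hD0.continuousOn_coord.comp (continuousOn_retractedOrbit hD hG hGc le_rfl)
      fun t ht => hD0.arc_subset (hZk t ht)).mono hsub
  obtain ⟨q, hq, hfix, hnot⟩ := exists_fixedPt_not_eventually_eq huv hθ
    (by rw [hu0]; exact hu.1) (by rw [hvL]; exact hv.2)
  have hstay : ∀ i < k, G i (Z i q) ∈ (D (i + 1)).arc := by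
    intro i hi
    by_contra hout
    refine hnot ?_
    filter_upwards [(eventually_retractedOrbit_eq hD hG hGc hi (hsub hq) hout hi
      le_rfl).filter_mono (nhdsWithin_mono _ hsub)] with t ht
    rw [show Z k t = Z k q from ht, hfix]
  refine ⟨fun i => Z i q, fun i hi => retractedOrbit_mem_arc hD hG hi (hsub hq),
    fun i hi => (hD (i + 1) hi).param_coord (hstay i hi), ?_⟩
  calc Z k q = (D 0).param ((D 0).coord (Z k q)) := (hD0.param_coord (hZk q (hsub hq))).symm
    _ = Z 0 q := by rw [hfix]; rfl

end RetractedOrbit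

lemma mem_Sspace_iff {z : ℂ} :
    z ∈ Sspace ↔ z.im = 0 ∨ ((∃ m : ℤ, z.re = m) ∧ 0 ≤ z.im ∧ z.im ≤ 1) := by
  simp [Sspace, realAxis, branches]

lemma im_nonneg_of_mem_Sspace {z : ℂ} (hz : z ∈ Sspace) : 0 ≤ z.im := by
  rcases mem_Sspace_iff.1 hz with h | h
  · exact h.ge
  · exact h.2.1

lemma im_le_one_of_mem_Sspace {z : ℂ} (hz : z ∈ Sspace) : z.im ≤ 1 := by
  rcases mem_Sspace_iff.1 hz with h | h
  · rw [h]; exact zero_le_one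
  · exact h.2.2

lemma exists_int_re_of_mem_Sspace {z : ℂ} (hz : z ∈ Sspace) (h : 0 < z.im) :
    ∃ m : ℤ, z.re = m := by
  rcases mem_Sspace_iff.1 hz with h' | h'
  · exact absurd h' h.ne'
  · exact h'.1

lemma mk_re_mem_Sspace {z : ℂ} (hz : z ∈ Sspace) {y : ℝ} (hy : y ∈ Icc 0 z.im) :
    (⟨z.re, y⟩ : ℂ) ∈ Sspace := by
  rcases mem_Sspace_iff.1 hz with h | h
  · exact mem_Sspace_iff.2 (Or.inl (le_antisymm (h ▸ hy.2) hy.1))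
  · exact mem_Sspace_iff.2 (Or.inr ⟨h.1, hy.1, hy.2.trans h.2.2⟩)

lemma add_intCast_mem_Sspace {z : ℂ} (hz : z ∈ Sspace) (c : ℤ) : z + c ∈ Sspace := by
  rcases mem_Sspace_iff.1 hz with h | ⟨⟨m, hm⟩, h0, h1⟩
  · exact mem_Sspace_iff.2 (Or.inl (by simp [h]))
  · exact mem_Sspace_iff.2 (Or.inr ⟨⟨m + c, by simp [hm]⟩, by simpa using h0, by simpa using h1⟩)

/-- For integer `c` and `h ≥ 0`, the points of `S` in this open set are those of the branch
`B_c` above height `h`. -/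
def branchAbove (c h : ℝ) : Set ℂ := {w | |w.re - c| < w.im - h}

lemma isOpen_branchAbove (c h : ℝ) : IsOpen (branchAbove c h) :=
  isOpen_lt (by fun_prop) (by fun_prop)

lemma mem_branchAbove_iff {c h : ℝ} (hc : ∃ m : ℤ, c = m) (hh : 0 ≤ h) {w : ℂ}
    (hw : w ∈ Sspace) : w ∈ branchAbove c h ↔ w.re = c ∧ h < w.im := by
  constructor
  · intro hwc
    have hwc : |w.re - c| < w.im - h := hwc
    have him : h < w.im := by linarith [abs_nonneg (w.re - c)]
    obtain ⟨m', hm'⟩ := exists_int_re_of_mem_Sspace hw (by linarith)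
    obtain ⟨m, rfl⟩ := hc
    have hlt : |((m' - m : ℤ) : ℝ)| < 1 := by
      push_cast
      linarith [hm' ▸ hwc, im_le_one_of_mem_Sspace hw]
    have : m' = m := by
      have := abs_lt.1 (show |m' - m| < 1 by exact_mod_cast hlt)
      omega
    exact ⟨by rw [hm', this], him⟩
  · rintro ⟨hre, him⟩
    show |w.re - c| < w.im - h
    rw [hre, sub_self, abs_zero]
    linarith

lemma mem_of_isPreconnected_of_separation {α : Type*} [TopologicalSpace α] {X C U V : Set α}
    {z a b : α} (hC : IsPreconnected C) (hCX : C ⊆ X) (ha : a ∈ C) (hb : b ∈ C)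
    (hU : IsOpen U) (hV : IsOpen V) (haU : a ∈ U) (hbV : b ∈ V)
    (hcover : ∀ w ∈ X, w ≠ z → w ∈ U ∨ w ∈ V) (hdisj : ∀ w ∈ X, w ∈ U → w ∉ V) :
    z ∈ C := by
  by_contra hz
  obtain ⟨w, hwC, hwU, hwV⟩ := hC U V hU hV
    (fun w hw => hcover w (hCX hw) (by rintro rfl; exact hz hw)) ⟨a, ha, haU⟩ ⟨b, hb, hbV⟩
  exact hdisj w (hCX hwC) hwU hwV

lemma mk_mem_of_isPreconnected_above {c h : ℝ} (hc : ∃ m : ℤ, c = m) (hh : 0 ≤ h)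
    {C : Set ℂ} (hC : IsPreconnected C) (hCS : C ⊆ Sspace) {u v : ℂ} (hu : u ∈ C)
    (hv : v ∈ C) (hu' : u.re ≠ c ∨ u.im < h) (hv' : v.re = c ∧ h < v.im) :
    (⟨c, h⟩ : ℂ) ∈ C := by
  refine mem_of_isPreconnected_of_separation hC hCS hu hv
    ((isOpen_ne_fun Complex.continuous_re continuous_const).union
      (isOpen_lt Complex.continuous_im continuous_const)) (isOpen_branchAbove c h) hu'
    ((mem_branchAbove_iff hc hh (hCS hv)).2 hv') (fun w hw hwz => ?_) (fun w hw hwU hwV => ?_)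
  · by_cases hre : w.re = c
    · rcases lt_trichotomy w.im h with him | him | him
      · exact Or.inl (Or.inr him)
      · exact absurd (Complex.ext hre him) hwz
      · exact Or.inr ((mem_branchAbove_iff hc hh hw).2 ⟨hre, him⟩)
    · exact Or.inl (Or.inl hre)
  · obtain ⟨hre, him⟩ := (mem_branchAbove_iff hc hh hw).1 hwV
    rcases hwU with hwU | hwU
    · exact hwU hre
    · exact lt_asymm him hwU

lemma mk_zero_mem_of_isPreconnected {x : ℝ} {C : Set ℂ} (hC : IsPreconnected C)
    (hCS : C ⊆ Sspace) {u v : ℂ} (hu : u ∈ C) (hv : v ∈ C) (hux : u.re < x) (hxv : x < v.re) :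
    (⟨x, 0⟩ : ℂ) ∈ C := by
  have hU : IsOpen {w : ℂ | w.re < x} := isOpen_lt Complex.continuous_re continuous_const
  have hR : IsOpen {w : ℂ | x < w.re} := isOpen_lt continuous_const Complex.continuous_re
  by_cases hx : ∃ m : ℤ, x = m
  · -- at an integer the branch `B_x` is a third component of `S ∖ {x}`
    refine mem_of_isPreconnected_of_separation hC hCS hu hv hU
      (hR.union (isOpen_branchAbove x 0)) hux (Or.inl hxv) (fun w hw hwz => ?_)
      (fun w hw hwU hwV => ?_)
    · rcases lt_trichotomy w.re x with hre | hre | hre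
      · exact Or.inl hre
      · refine Or.inr (Or.inr ((mem_branchAbove_iff hx le_rfl hw).2 ⟨hre, ?_⟩))
        exact (im_nonneg_of_mem_Sspace hw).lt_of_ne fun h => hwz (Complex.ext hre h.symm)
      · exact Or.inr (Or.inl hre)
    · rcases hwV with hwV | hwV
      · exact lt_asymm (a := w.re) hwU hwV
      · exact hwU.ne ((mem_branchAbove_iff hx le_rfl hw).1 hwV).1
  · refine mem_of_isPreconnected_of_separation hC hCS hu hv hU hR hux hxv
      (fun w hw hwz => ?_) (fun w _ hwU hwV => lt_asymm (a := w.re) hwU hwV)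
    rcases lt_trichotomy w.re x with hre | hre | hre
    · exact Or.inl hre
    · refine absurd (Complex.ext hre ?_) hwz
      by_contra him
      exact hx (hre ▸ exists_int_re_of_mem_Sspace hw
        ((im_nonneg_of_mem_Sspace hw).lt_of_ne (Ne.symm him)))
    · exact Or.inr hre

lemma sHull_subset_image {p : ℝ → ℂ} {s : ℝ} (hs : 0 ≤ s) (hp : ContinuousOn p (Icc 0 s))
    (hpS : MapsTo p (Icc 0 s) Sspace) : sHull {p 0, p s} ⊆ p '' Icc 0 s :=
  sInter_subset_of_mem ⟨insert_subset_iff.2 ⟨mem_image_of_mem _ (left_mem_Icc.2 hs),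
    singleton_subset_iff.2 (mem_image_of_mem _ (right_mem_Icc.2 hs))⟩, hpS.image_subset,
    (isCompact_Icc.image_of_continuousOn hp).isClosed,
    (nonempty_Icc.2 hs).image _, isPreconnected_Icc.image _ hp⟩

namespace ArcData

structure IsSArc (A : ArcData ℂ) (a b : ℂ) : Prop extends A.IsRetractArc Sspace where
  param_zero : A.param 0 = a
  param_len : A.param A.len = b
  arc_subset_of_isPreconnected :
    ∀ C ⊆ Sspace, a ∈ C → b ∈ C → IsPreconnected C → A.arc ⊆ C

namespace IsSArc

variable {A B : ArcData ℂ} {a b c d : ℂ}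

lemma sHull_eq (hA : A.IsSArc a b) : sHull {a, b} = A.arc := by
  refine (Subset.antisymm ?_ fun x hx => mem_sInter.2 fun C ⟨hab, hCS, _, hC⟩ =>
    hA.arc_subset_of_isPreconnected C hCS (hab (by simp)) (hab (by simp)) hC.isPreconnected hx)
  have := sHull_subset_image hA.len_pos.le hA.continuousOn_param hA.mapsTo_param
  rwa [hA.param_zero, hA.param_len] at this

lemma coord_le_coord (hA : A.IsSArc a b) {x y : ℂ} (hy : y ∈ A.arc) (hxy : x ∈ sHull {a, y}) :
    A.coord x ≤ A.coord y := by
  obtain ⟨s, hs, rfl⟩ := hy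
  have hsub : Icc 0 s ⊆ Icc 0 A.len := Icc_subset_Icc le_rfl hs.2
  have := sHull_subset_image hs.1 (hA.continuousOn_param.mono hsub)
    (hA.mapsTo_param.mono_left hsub)
  rw [hA.param_zero] at this
  obtain ⟨r, hr, rfl⟩ := this hxy
  rw [hA.coord_param r (hsub hr), hA.coord_param s hs]
  exact hr.2

lemma reverse (hA : A.IsSArc a b) : A.reverse.IsSArc b a where
  toIsRetractArc := hA.toIsRetractArc.reverse
  param_zero := by simp [ArcData.reverse, hA.param_len]
  param_len := by simp [ArcData.reverse, hA.param_zero]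
  arc_subset_of_isPreconnected C hCS hb ha hC :=
    A.arc_reverse ▸ hA.arc_subset_of_isPreconnected C hCS ha hb hC

lemma covers (hA : A.IsSArc a b) (hB : B.IsSArc c d) {G : ℂ → ℂ} (h : PosCovers G a b c d) :
    A.Covers B G := by
  obtain ⟨x, y, hx, hy, hxy, hGx, hGy⟩ := h
  rw [hA.sHull_eq] at hx hy
  have hB0 : B.coord c = 0 := by
    rw [← hB.param_zero, hB.coord_param 0 ⟨le_rfl, hB.len_pos.le⟩]
  have hBL : B.coord d = B.len := by
    rw [← hB.param_len, hB.coord_param _ ⟨hB.len_pos.le, le_rfl⟩]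
  refine ⟨A.coord x, hA.mapsTo_coord (hA.arc_subset hx), A.coord y,
    ⟨hA.coord_le_coord hy hxy, (hA.mapsTo_coord (hA.arc_subset hy)).2⟩, ?_, ?_⟩
  · rw [hA.param_coord hx, hGx, hB0]
  · rw [hA.param_coord hy, hGy, hBL]

lemma covers_orient (hA : A.IsSArc a b) (hB : B.IsSArc c d) {G : ℂ → ℂ} {ε : Bool}
    (h : if ε then PosCovers G a b c d else NegCovers G a b c d) :
    A.Covers (B.orient ε) G := by
  cases ε
  · exact hA.covers hB.reverse (by simpa [NegCovers] using h)
  · exact hA.covers hB (by simpa using h)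

end IsSArc

end ArcData

/-- On `S`, `bump c H` is `min w.im H` on the branch `B_c` and vanishes off it
(provided `c ∈ ℤ` when `H > 0`). -/
def bump (c H : ℝ) (w : ℂ) : ℝ := min (min w.im H) (H * max 0 (1 - |w.re - c|))

@[fun_prop] lemma continuous_bump (c H : ℝ) : Continuous (bump c H) := by
  unfold bump
  fun_prop

lemma bump_nonneg {c H : ℝ} {w : ℂ} (hw : 0 ≤ w.im) (hH : 0 ≤ H) : 0 ≤ bump c H w :=
  le_min (le_min hw hH) (mul_nonneg hH (le_max_left _ _))

lemma bump_le_im (c H : ℝ) (w : ℂ) : bump c H w ≤ w.im :=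
  (min_le_left _ _).trans (min_le_left _ _)

lemma bump_le (c H : ℝ) (w : ℂ) : bump c H w ≤ H :=
  (min_le_left _ _).trans (min_le_right _ _)

lemma bump_of_re_eq {c H : ℝ} {w : ℂ} (h : w.re = c) : bump c H w = min w.im H := by
  simp [bump, h]

lemma bump_of_re_ne {c H : ℝ} {w : ℂ} (hw : w ∈ Sspace) (hH : 0 ≤ H)
    (hc : 0 < H → ∃ m : ℤ, c = m) (hne : w.re ≠ c) : bump c H w = 0 := by
  refine le_antisymm ?_ (bump_nonneg (im_nonneg_of_mem_Sspace hw) hH)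
  rcases (im_nonneg_of_mem_Sspace hw).eq_or_lt with him | him
  · exact him ▸ bump_le_im c H w
  rcases hH.eq_or_lt with hH0 | hH0
  · exact hH0 ▸ bump_le c H w
  obtain ⟨m', hm'⟩ := exists_int_re_of_mem_Sspace hw him
  obtain ⟨m, rfl⟩ := hc hH0
  have hgap : (1 : ℝ) ≤ |w.re - m| := by
    rw [hm', ← Int.cast_sub, ← Int.cast_abs]
    exact_mod_cast Int.one_le_abs (sub_ne_zero.2 fun h => hne (by rw [hm', h]))
  exact (min_le_right _ _).trans (by rw [max_eq_left (by linarith), mul_zero])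

section VertArc

variable {a b : ℂ}

def vertArc (a b : ℂ) : ArcData ℂ where
  len := b.im - a.im
  param t := ⟨a.re, a.im + t⟩
  coord w := min (b.im - a.im) (max 0 (bump a.re b.im w - a.im))

lemma vertArc_coord_eq_zero (ha : a ∈ Sspace) (hb : b ∈ Sspace) (hre : a.re = b.re)
    (him : a.im < b.im) {w : ℂ} (hw : w ∈ Sspace) (h : w.re ≠ a.re ∨ w.im ≤ a.im) :
    (vertArc a b).coord w = 0 := by
  have hb0 : 0 < b.im := (im_nonneg_of_mem_Sspace ha).trans_lt him
  have hbump : bump a.re b.im w ≤ a.im := by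
    rcases h with h | h
    · rw [bump_of_re_ne hw hb0.le (fun _ => hre ▸ exists_int_re_of_mem_Sspace hb hb0) h]
      exact im_nonneg_of_mem_Sspace ha
    · exact (bump_le_im _ _ _).trans h
  simp only [vertArc]
  rw [max_eq_left (by linarith), min_eq_right (by linarith)]

lemma vertArc_coord_of_re_eq {w : ℂ} (h : w.re = a.re) (hw : a.im ≤ w.im) (hwb : w.im ≤ b.im) :
    (vertArc a b).coord w = w.im - a.im := by
  simp only [vertArc, bump_of_re_eq h, min_eq_left hwb]
  rw [max_eq_right (by linarith), min_eq_right (by linarith)]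

lemma vertArc_coord_eq_len (him : a.im < b.im) {w : ℂ} (h : w.re = a.re) (hw : b.im ≤ w.im) :
    (vertArc a b).coord w = (vertArc a b).len := by
  simp only [vertArc, bump_of_re_eq h, min_eq_right hw]
  rw [max_eq_right (by linarith), min_self]

lemma vertArc_arc_subset (hb : b ∈ Sspace) (hre : a.re = b.re)
    {C : Set ℂ} (hC : IsPreconnected C) (hCS : C ⊆ Sspace) (haC : a ∈ C) (hbC : b ∈ C) :
    (vertArc a b).arc ⊆ C := by
  rintro _ ⟨t, ⟨ht0, htL⟩, rfl⟩
  simp only [vertArc] at htL ⊢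
  rcases ht0.eq_or_lt with rfl | ht0
  · simpa using haC
  rcases htL.eq_or_lt with rfl | htL
  · convert hbC using 1
    exact Complex.ext hre (by ring)
  have ha0 := im_nonneg_of_mem_Sspace (hCS haC)
  exact mk_mem_of_isPreconnected_above (hre ▸ exists_int_re_of_mem_Sspace hb (by linarith))
    (by linarith) hC hCS haC hbC (Or.inr (by linarith))
    ⟨hre.symm, by linarith⟩

theorem isSArc_vertArc (ha : a ∈ Sspace) (hb : b ∈ Sspace) (hre : a.re = b.re)
    (him : a.im < b.im) : (vertArc a b).IsSArc a b where
  len_pos := sub_pos.2 him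
  continuousOn_param := by
    simp only [vertArc, Complex.mk_eq_add_mul_I]
    fun_prop
  continuousOn_coord := by
    simp only [vertArc]
    fun_prop
  mapsTo_param t ht := by
    simp only [vertArc] at ht ⊢
    exact hre ▸ mk_re_mem_Sspace hb ⟨by linarith [ht.1, im_nonneg_of_mem_Sspace ha],
      by linarith [ht.2]⟩
  mapsTo_coord w _ := ⟨le_min (sub_pos.2 him).le (le_max_left _ _), min_le_left _ _⟩
  coord_param t ht := by
    have ht : t ∈ Icc 0 (b.im - a.im) := ht
    have h := vertArc_coord_of_re_eq (a := a) (b := b) (w := ⟨a.re, a.im + t⟩) rfl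
      (by dsimp only; linarith [ht.1]) (by dsimp only; linarith [ht.2])
    show (vertArc a b).coord ⟨a.re, a.im + t⟩ = t
    rw [h]
    ring
  eventually_coord_eq w hw hout := by
    by_cases hre' : w.re = a.re
    · rcases lt_or_ge w.im a.im with hlow | hlow
      · exact eventually_eq_of_isOpen (isOpen_lt Complex.continuous_im continuous_const) hw
          hlow fun y hy => vertArc_coord_eq_zero ha hb hre him hy.1 (Or.inr hy.2.le)
      have hc : ∃ m : ℤ, a.re = m :=
        hre ▸ exists_int_re_of_mem_Sspace hb (by linarith [im_nonneg_of_mem_Sspace ha])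
      have hhigh : b.im < w.im := by
        refine lt_of_not_ge fun hwb => hout ⟨w.im - a.im, ⟨by linarith, ?_⟩, ?_⟩
        · show w.im - a.im ≤ b.im - a.im
          linarith
        · exact Complex.ext hre'.symm (by simp [vertArc])
      have hb0 : 0 ≤ b.im := by linarith [im_nonneg_of_mem_Sspace ha]
      exact eventually_eq_of_isOpen (isOpen_branchAbove a.re b.im) hw
        ((mem_branchAbove_iff hc hb0 hw).2 ⟨hre', hhigh⟩) fun y hy =>
          have hy' := (mem_branchAbove_iff hc hb0 hy.1).1 hy.2
          vertArc_coord_eq_len him hy'.1 hy'.2.le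
    · exact eventually_eq_of_isOpen (isOpen_ne_fun Complex.continuous_re continuous_const) hw
        hre' fun y hy => vertArc_coord_eq_zero ha hb hre him hy.1 (Or.inl hy.2)
  param_zero := Complex.ext rfl (add_zero _)
  param_len := Complex.ext hre (by simp [vertArc])
  arc_subset_of_isPreconnected C hCS haC hbC hC := vertArc_arc_subset hb hre hC hCS haC hbC

end VertArc

section BrokenArc

variable {a b : ℂ}

/-- Down the branch of `a` to the real axis, along the axis, and up the branch of `b`; the
parameter `a.im + (b.re - a.re)` is the corner below `b`. -/
def brokenArc (a b : ℂ) : ArcData ℂ where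
  len := a.im + (b.re - a.re) + b.im
  param t := ⟨min b.re (max a.re (a.re + (t - a.im))),
    max (a.im - t) (max 0 (t - (a.im + (b.re - a.re))))⟩
  coord w := a.im + (min b.re (max a.re w.re) - a.re) + bump b.re b.im w - bump a.re a.im w

lemma brokenArc_param_of_le (hlt : a.re < b.re) {t : ℝ} (ht : t ≤ a.im) :
    (brokenArc a b).param t = ⟨a.re, a.im - t⟩ := by
  simp only [brokenArc]
  rw [max_eq_left (by linarith), min_eq_right hlt.le, max_eq_left (a := (0 : ℝ)) (by linarith),
    max_eq_left (by linarith)]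

lemma brokenArc_param_of_mem_Icc {t : ℝ} (ht : t ∈ Icc a.im (a.im + (b.re - a.re))) :
    (brokenArc a b).param t = ⟨a.re + (t - a.im), 0⟩ := by
  simp only [brokenArc]
  rw [max_eq_right (by linarith [ht.1]), min_eq_right (by linarith [ht.2]),
    max_eq_left (a := (0 : ℝ)) (by linarith [ht.2]), max_eq_right (by linarith [ht.1])]

lemma brokenArc_param_of_ge (hlt : a.re < b.re) {t : ℝ} (ht : a.im + (b.re - a.re) ≤ t) :
    (brokenArc a b).param t = ⟨b.re, t - (a.im + (b.re - a.re))⟩ := by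
  simp only [brokenArc]
  rw [max_eq_right (by linarith), min_eq_left (by linarith),
    max_eq_right (a := (0 : ℝ)) (by linarith), max_eq_right (by linarith)]

lemma brokenArc_coord_of_re_ne (ha : a ∈ Sspace) (hb : b ∈ Sspace) {w : ℂ} (hw : w ∈ Sspace)
    (h₁ : w.re ≠ a.re) (h₂ : w.re ≠ b.re) :
    (brokenArc a b).coord w = a.im + (min b.re (max a.re w.re) - a.re) := by
  simp only [brokenArc, bump_of_re_ne hw (im_nonneg_of_mem_Sspace ha)
    (exists_int_re_of_mem_Sspace ha) h₁, bump_of_re_ne hw (im_nonneg_of_mem_Sspace hb)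
    (exists_int_re_of_mem_Sspace hb) h₂]
  ring

lemma brokenArc_coord_of_re_eq_left (hb : b ∈ Sspace) (hlt : a.re < b.re) {w : ℂ}
    (hw : w ∈ Sspace) (h : w.re = a.re) : (brokenArc a b).coord w = a.im - min w.im a.im := by
  simp only [brokenArc, bump_of_re_eq h, bump_of_re_ne hw (im_nonneg_of_mem_Sspace hb)
    (exists_int_re_of_mem_Sspace hb) (h ▸ hlt.ne), h, max_self, min_eq_right hlt.le]
  ring

lemma brokenArc_coord_of_re_eq_right (ha : a ∈ Sspace) (hlt : a.re < b.re) {w : ℂ}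
    (hw : w ∈ Sspace) (h : w.re = b.re) :
    (brokenArc a b).coord w = a.im + (b.re - a.re) + min w.im b.im := by
  simp only [brokenArc, bump_of_re_eq h, bump_of_re_ne hw (im_nonneg_of_mem_Sspace ha)
    (exists_int_re_of_mem_Sspace ha) (h ▸ hlt.ne'), h, max_eq_right hlt.le, min_self]
  ring

lemma brokenArc_arc_subset (hlt : a.re < b.re) {C : Set ℂ} (hC : IsPreconnected C)
    (hCS : C ⊆ Sspace) (haC : a ∈ C) (hbC : b ∈ C) : (brokenArc a b).arc ⊆ C := by
  have ha0 := im_nonneg_of_mem_Sspace (hCS haC)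
  rintro _ ⟨t, ⟨ht0, htL⟩, rfl⟩
  simp only [brokenArc] at htL
  rcases ht0.eq_or_lt with rfl | ht0
  · rw [brokenArc_param_of_le hlt ha0]
    simpa using haC
  rcases htL.eq_or_lt with rfl | htL
  · rw [brokenArc_param_of_ge hlt (by linarith [im_nonneg_of_mem_Sspace (hCS hbC)])]
    convert hbC using 1
    exact Complex.ext rfl (by ring)
  rcases le_or_gt t a.im with h₁ | h₁
  · rw [brokenArc_param_of_le hlt h₁]
    exact mk_mem_of_isPreconnected_above (exists_int_re_of_mem_Sspace (hCS haC) (by linarith))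
      (by linarith) hC hCS hbC haC (Or.inl hlt.ne') ⟨rfl, by linarith⟩
  rcases lt_or_ge t (a.im + (b.re - a.re)) with h₂ | h₂
  · rw [brokenArc_param_of_mem_Icc ⟨h₁.le, h₂.le⟩]
    exact mk_zero_mem_of_isPreconnected hC hCS haC hbC (by linarith) (by linarith)
  · rw [brokenArc_param_of_ge hlt h₂]
    exact mk_mem_of_isPreconnected_above (exists_int_re_of_mem_Sspace (hCS hbC) (by linarith))
      (by linarith) hC hCS haC hbC (Or.inl hlt.ne) ⟨rfl, by linarith⟩

theorem isSArc_brokenArc (ha : a ∈ Sspace) (hb : b ∈ Sspace) (hlt : a.re < b.re) :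
    (brokenArc a b).IsSArc a b where
  len_pos := by
    simp only [brokenArc]
    linarith [im_nonneg_of_mem_Sspace ha, im_nonneg_of_mem_Sspace hb]
  continuousOn_param := by
    simp only [brokenArc, Complex.mk_eq_add_mul_I]
    fun_prop
  continuousOn_coord := by
    simp only [brokenArc]
    fun_prop
  mapsTo_param t ht := by
    have ht : t ∈ Icc 0 (a.im + (b.re - a.re) + b.im) := ht
    rcases le_or_gt t a.im with h₁ | h₁
    · rw [brokenArc_param_of_le hlt h₁]
      exact mk_re_mem_Sspace ha ⟨by linarith, by linarith [ht.1]⟩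
    rcases le_or_gt t (a.im + (b.re - a.re)) with h₂ | h₂
    · rw [brokenArc_param_of_mem_Icc ⟨h₁.le, h₂⟩]
      exact mem_Sspace_iff.2 (Or.inl rfl)
    · rw [brokenArc_param_of_ge hlt h₂.le]
      exact mk_re_mem_Sspace hb ⟨by linarith, by linarith [ht.2]⟩
  mapsTo_coord w hw := by
    have := bump_nonneg (c := a.re) (im_nonneg_of_mem_Sspace hw) (im_nonneg_of_mem_Sspace ha)
    have := bump_nonneg (c := b.re) (im_nonneg_of_mem_Sspace hw) (im_nonneg_of_mem_Sspace hb)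
    have := bump_le a.re a.im w
    have := bump_le b.re b.im w
    have : a.re ≤ min b.re (max a.re w.re) := le_min hlt.le (le_max_left _ _)
    have : min b.re (max a.re w.re) ≤ b.re := min_le_left _ _
    constructor <;> simp only [brokenArc] <;> linarith
  coord_param t ht := by
    have ht : t ∈ Icc 0 (a.im + (b.re - a.re) + b.im) := ht
    rcases le_or_gt t a.im with h₁ | h₁
    · have hS : (⟨a.re, a.im - t⟩ : ℂ) ∈ Sspace :=
        mk_re_mem_Sspace ha ⟨by linarith, by linarith [ht.1]⟩
      rw [brokenArc_param_of_le hlt h₁, brokenArc_coord_of_re_eq_left hb hlt hS rfl,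
        min_eq_left (by linarith [ht.1])]
      ring
    rcases lt_or_ge t (a.im + (b.re - a.re)) with h₂ | h₂
    · rw [brokenArc_param_of_mem_Icc ⟨h₁.le, h₂.le⟩, brokenArc_coord_of_re_ne ha hb
        (mem_Sspace_iff.2 (Or.inl rfl)) (ne_of_gt (by dsimp only; linarith))
        (ne_of_lt (by dsimp only; linarith))]
      dsimp only
      rw [max_eq_right (by linarith), min_eq_right (by linarith)]
      ring
    · have hS : (⟨b.re, t - (a.im + (b.re - a.re))⟩ : ℂ) ∈ Sspace :=
        mk_re_mem_Sspace hb ⟨by linarith, by linarith [ht.2]⟩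
      rw [brokenArc_param_of_ge hlt h₂, brokenArc_coord_of_re_eq_right ha hlt hS rfl,
        min_eq_left (by linarith [ht.2])]
      ring
  eventually_coord_eq w hw hout := by
    have ha0 := im_nonneg_of_mem_Sspace ha
    have hb0 := im_nonneg_of_mem_Sspace hb
    have hw0 := im_nonneg_of_mem_Sspace hw
    have hlen : (brokenArc a b).len = a.im + (b.re - a.re) + b.im := rfl
    rcases lt_trichotomy w.re a.re with h | h | h
    · refine eventually_eq_of_isOpen (c := a.im)
        (isOpen_lt Complex.continuous_re continuous_const) hw h fun y ⟨hy, hya⟩ => ?_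
      have hya : y.re < a.re := hya
      rw [brokenArc_coord_of_re_ne ha hb hy hya.ne (by linarith), max_eq_left hya.le,
        min_eq_right hlt.le, sub_self, add_zero]
    · have him : a.im < w.im := lt_of_not_ge fun hwa => hout ⟨a.im - w.im,
        ⟨by linarith, by linarith⟩, by
          rw [brokenArc_param_of_le hlt (by linarith)]
          exact Complex.ext h.symm (by ring)⟩
      have hc : ∃ m : ℤ, a.re = m := h ▸ exists_int_re_of_mem_Sspace hw (by linarith)
      refine eventually_eq_of_isOpen (c := 0) (isOpen_branchAbove a.re a.im) hw
        ((mem_branchAbove_iff hc ha0 hw).2 ⟨h, him⟩) fun y ⟨hy, hya⟩ => ?_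
      obtain ⟨hyre, hyim⟩ := (mem_branchAbove_iff hc ha0 hy).1 hya
      rw [brokenArc_coord_of_re_eq_left hb hlt hy hyre, min_eq_right hyim.le, sub_self]
    rcases lt_trichotomy w.re b.re with h' | h' | h'
    · have him : 0 < w.im := hw0.lt_of_ne fun h0 => hout ⟨a.im + (w.re - a.re),
        ⟨by linarith, by linarith⟩, by
          rw [brokenArc_param_of_mem_Icc ⟨by linarith, by linarith⟩]
          exact Complex.ext (by ring) h0⟩
      have hc := exists_int_re_of_mem_Sspace hw him
      refine eventually_eq_of_isOpen (c := a.im + (w.re - a.re)) (isOpen_branchAbove w.re 0)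
        hw ((mem_branchAbove_iff hc le_rfl hw).2 ⟨rfl, him⟩) fun y ⟨hy, hyw⟩ => ?_
      have hyre := ((mem_branchAbove_iff hc le_rfl hy).1 hyw).1
      rw [brokenArc_coord_of_re_ne ha hb hy (by linarith) (by linarith), hyre,
        max_eq_right h.le, min_eq_right h'.le]
    · have him : b.im < w.im := lt_of_not_ge fun hwb => hout ⟨a.im + (b.re - a.re) + w.im,
        ⟨by linarith, by linarith⟩, by
          rw [brokenArc_param_of_ge hlt (by linarith)]
          exact Complex.ext h'.symm (by ring)⟩
      have hc : ∃ m : ℤ, b.re = m := h' ▸ exists_int_re_of_mem_Sspace hw (by linarith)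
      refine eventually_eq_of_isOpen (c := a.im + (b.re - a.re) + b.im)
        (isOpen_branchAbove b.re b.im) hw
        ((mem_branchAbove_iff hc hb0 hw).2 ⟨h', him⟩) fun y ⟨hy, hyb⟩ => ?_
      obtain ⟨hyre, hyim⟩ := (mem_branchAbove_iff hc hb0 hy).1 hyb
      rw [brokenArc_coord_of_re_eq_right ha hlt hy hyre, min_eq_right hyim.le]
    · refine eventually_eq_of_isOpen (c := a.im + (b.re - a.re))
        (isOpen_lt continuous_const Complex.continuous_re) hw h' fun y ⟨hy, hyb⟩ => ?_
      have hyb : b.re < y.re := hyb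
      rw [brokenArc_coord_of_re_ne ha hb hy (by linarith) hyb.ne', max_eq_right (by linarith),
        min_eq_left hyb.le]
  param_zero := by
    rw [brokenArc_param_of_le hlt (im_nonneg_of_mem_Sspace ha)]
    exact Complex.ext rfl (sub_zero _)
  param_len := by
    rw [brokenArc_param_of_ge hlt (by simp only [brokenArc]; linarith [im_nonneg_of_mem_Sspace hb])]
    exact Complex.ext rfl (by simp only [brokenArc]; ring)
  arc_subset_of_isPreconnected C hCS haC hbC hC := brokenArc_arc_subset hlt hC hCS haC hbC

end BrokenArc

def sArc (a b : ℂ) : ArcData ℂ :=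
  if a.re = b.re then (if a.im ≤ b.im then vertArc a b else (vertArc b a).reverse)
  else if a.re < b.re then brokenArc a b else (brokenArc b a).reverse

theorem isSArc_sArc {a b : ℂ} (ha : a ∈ Sspace) (hb : b ∈ Sspace) (hne : a ≠ b) :
    (sArc a b).IsSArc a b := by
  unfold sArc
  split_ifs with hre him hlt
  · exact isSArc_vertArc ha hb hre (him.lt_of_ne fun h => hne (Complex.ext hre h))
  · exact (isSArc_vertArc hb ha hre.symm (not_le.1 him)).reverse
  · exact isSArc_brokenArc ha hb hlt
  · exact (isSArc_brokenArc hb ha ((not_lt.1 hlt).lt_of_ne (Ne.symm hre))).reverse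

namespace DegMap

variable {F : ℂ → ℂ}

lemma map_add_intCast (hF : DegMap 1 F) {z : ℂ} (hz : z ∈ Sspace) (c : ℤ) :
    F (z + c) = F z + c := by
  have hnat : ∀ w ∈ Sspace, ∀ m : ℕ, F (w + m) = F w + m := by
    intro w hw m
    induction m with
    | zero => simp
    | succ m ih =>
      have hwm : w + m ∈ Sspace := by simpa using add_intCast_mem_Sspace hw m
      rw [Nat.cast_succ, ← add_assoc, hF.2.2 _ hwm, ih]
      push_cast
      ring
  obtain ⟨m, rfl | rfl⟩ := Int.eq_nat_or_neg c
  · simpa using hnat z hz m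
  · have := hnat _ (add_intCast_mem_Sspace hz (-m)) m
    simp only [Int.cast_neg, Int.cast_natCast, neg_add_cancel_right] at this ⊢
    linear_combination -this

lemma iterate_add_intCast (hF : DegMap 1 F) {z : ℂ} (hz : z ∈ Sspace) (c : ℤ) (m : ℕ) :
    F^[m] (z + c) = F^[m] z + c := by
  induction m with
  | zero => simp
  | succ m ih =>
    rw [iterate_succ_apply', iterate_succ_apply', ih, hF.map_add_intCast (hF.1.iterate m hz)]

lemma iterate_sum_eq_of_orbit (hF : DegMap 1 F) {k : ℕ} {n : ℕ → ℕ} {p : ℕ → ℤ} {z : ℕ → ℂ}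
    (hz : ∀ i < k, z i ∈ Sspace) (hstep : ∀ i < k, z (i + 1) = F^[n i] (z i) - p i) {i : ℕ}
    (hi : i ≤ k) :
    F^[∑ j ∈ Finset.range i, n j] (z 0) = z i + ((∑ j ∈ Finset.range i, p j : ℤ) : ℂ) := by
  induction i with
  | zero => simp
  | succ i ih =>
    rw [Finset.sum_range_succ, add_comm, iterate_add_apply, ih (by omega),
      hF.iterate_add_intCast (hz i hi) _, hstep i hi]
    push_cast [Finset.sum_range_succ]
    ring

end DegMap

def runningSign (ε : ℕ → Bool) : ℕ → Bool
  | 0 => true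
  | i + 1 => runningSign ε i == ε i

lemma prod_sign_eq_runningSign (ε : ℕ → Bool) (i : ℕ) :
    ∏ j ∈ Finset.range i, (if ε j then (1 : ℤ) else -1) = if runningSign ε i then 1 else -1 := by
  induction i with
  | zero => simp [runningSign]
  | succ i ih =>
    rw [Finset.prod_range_succ, ih, runningSign]
    cases runningSign ε i <;> cases ε i <;> simp

theorem statement13_general (F : ℂ → ℂ) (hF : DegMap 1 F) (k : ℕ)
    (a b : ℕ → ℂ) (n : ℕ → ℕ) (p : ℕ → ℤ) (ε : ℕ → Bool)
    (hS : ∀ i ≤ k, a i ∈ Sspace ∧ b i ∈ Sspace ∧ a i ≠ b i)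
    (hclose : a k = a 0 ∧ b k = b 0)
    (hcov : ∀ i < k,
      if ε i then
        PosCovers (fun z => F^[n i] z - (p i : ℂ)) (a i) (b i) (a (i + 1)) (b (i + 1))
      else
        NegCovers (fun z => F^[n i] z - (p i : ℂ)) (a i) (b i) (a (i + 1)) (b (i + 1)))
    (hsign : (∏ i ∈ Finset.range k, (if ε i then (1 : ℤ) else -1)) = 1) :
    ∃ x₀ ∈ sHull {a 0, b 0},
      F^[∑ j ∈ Finset.range k, n j] x₀ = x₀ + ((∑ j ∈ Finset.range k, p j : ℤ) : ℂ) ∧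
      ∀ i : ℕ, 0 < i → i < k →
        ∃ w ∈ sHull {a i, b i},
          F^[∑ j ∈ Finset.range i, n j] x₀ = w + ((∑ j ∈ Finset.range i, p j : ℤ) : ℂ) := by
  have hA : ∀ i ≤ k, (sArc (a i) (b i)).IsSArc (a i) (b i) := fun i hi =>
    isSArc_sArc (hS i hi).1 (hS i hi).2.1 (hS i hi).2.2
  -- reversing the arcs according to the running sign makes every covering positive
  set D : ℕ → ArcData ℂ := fun i => (sArc (a i) (b i)).orient (runningSign ε i)
  have hloop : D k = D 0 := by
    have : runningSign ε k = true := by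
      rw [prod_sign_eq_runningSign] at hsign
      by_contra h
      simp [h] at hsign
    simp only [D, this, hclose]
    rfl
  have hG : ∀ i, MapsTo (fun z => F^[n i] z - (p i : ℂ)) Sspace Sspace := fun i z hz => by
    simpa [sub_eq_add_neg] using add_intCast_mem_Sspace (hF.1.iterate (n i) hz) (-p i)
  have hD : ∀ i ≤ k, (D i).IsRetractArc Sspace := fun i hi =>
    (hA i hi).toIsRetractArc.orient (runningSign ε i)
  obtain ⟨z, hz, hzG, hzk⟩ := exists_orbit_of_covers_loop hD hloop (fun i _ => hG i)
    (fun i _ => (hF.2.1.iterate hF.1 (n i)).sub continuousOn_const)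
    fun i hi => ((hA i hi.le).covers_orient (hA (i + 1) hi) (hcov i hi)).orient _
  have hzI : ∀ i ≤ k, z i ∈ sHull {a i, b i} := fun i hi => by
    rw [(hA i hi).sHull_eq, ← ArcData.arc_orient _ (runningSign ε i)]
    exact hz i hi
  have horbit := fun i (hi : i ≤ k) => hF.iterate_sum_eq_of_orbit
    (fun i hi => (hD i hi.le).arc_subset (hz i hi.le)) hzG hi
  refine ⟨z 0, hzI 0 (Nat.zero_le k), by rw [horbit k le_rfl, hzk], fun i _ hi =>
    ⟨z i, hzI i hi.le, horbit i hi.le⟩⟩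

/-- Positive loops of signed coverings yield periodic-like points: given a
loop of signed coverings `(I_0,<₀) → (I_1,<₁) → ⋯ → (I_0,<₀)` of positive sign, with
the `i`-th covering realized by `F^[n i] − p i`, there is `x₀ ∈ I₀` with
`F^[m_k](x₀) = x₀ + p̂_k` and `F^[m_i](x₀) ∈ I_i + p̂_i` for `1 ≤ i ≤ k−1`.
Here the oriented interval `I_i` has endpoints `a i` (min) and `b i` (max). -/
theorem statement13 (F : ℂ → ℂ) (hF : DegMap 1 F) (k : ℕ) (hk : 0 < k)
    (a b : ℕ → ℂ) (n : ℕ → ℕ) (p : ℕ → ℤ) (ε : ℕ → Bool)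
    (hS : ∀ i ≤ k, a i ∈ Sspace ∧ b i ∈ Sspace ∧ a i ≠ b i)
    (hclose : a k = a 0 ∧ b k = b 0)
    (hn : ∀ i < k, 0 < n i)
    (hcov : ∀ i < k,
      if ε i then
        PosCovers (fun z => F^[n i] z - (p i : ℂ)) (a i) (b i) (a (i + 1)) (b (i + 1))
      else
        NegCovers (fun z => F^[n i] z - (p i : ℂ)) (a i) (b i) (a (i + 1)) (b (i + 1)))
    (hsign : (∏ i ∈ Finset.range k, (if ε i then (1 : ℤ) else -1)) = 1) :
    ∃ x₀ ∈ sHull {a 0, b 0},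
      F^[∑ j ∈ Finset.range k, n j] x₀ = x₀ + ((∑ j ∈ Finset.range k, p j : ℤ) : ℂ) ∧
      ∀ i : ℕ, 0 < i → i < k →
        ∃ w ∈ sHull {a i, b i},
          F^[∑ j ∈ Finset.range i, n j] x₀ = w + ((∑ j ∈ Finset.range i, p j : ℤ) : ℂ) :=
  statement13_general F hF k a b n p ε hS hclose hcov hsign

end
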